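/- Let Γ be the discrete Heisenberg-type group with presentation given by generators a = exp(2X₁), b = exp(Y₁), and central generators as in the 5-dimensional three-step Lie algebra 𝔤 = span{X₁,Y₁,Y₂,Z,W} with [X₁,Y₁] = Z, [X₁,Z] = [Y₁,Y₂] = W. Two elements γ = exp(2n₁X₁)exp(m₁Y₁)exp(m₂Y₂)exp(kZ)exp(jW) and γ' = exp(2n₁'X₁)exp(m₁'Y₁)exp(m₂'Y₂)exp(k'Z)exp(j'W) of Γ are conjugate in Γ if and only if n₁' = n₁, m₁' = m₁, m₂' = m₂, and there exist integers n̄₁, m̄₁, m̄₂, k̄ with k' = k + 2m₁n̄₁ − 2n₁m̄₁ and j' = j + m₂m̄₁ − m₁m̄₂ + 2kn̄₁ − 2n₁k̄ + 2m₁n̄₁² − 4n₁n̄₁m̄₁ + 2n₁²m̄₁. -/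
import Mathlib


namespace Stmt18

/-- The 5-dimensional space with coordinates `(x₁, y₁, y₂, z, w)`. -/
abbrev V : Type := Fin 5 → ℝ

/-- The three-step bracket with `[X₁,Y₁] = Z`, `[X₁,Z] = [Y₁,Y₂] = W`. -/
def br (u v : V) : V :=
  ![0, 0, 0,
    u 0 * v 1 - u 1 * v 0,
    u 0 * v 3 - u 3 * v 0 + u 1 * v 2 - u 2 * v 1]

/-- The group multiplication of the simply connected three-step nilpotent Lie
group `G` in exponential coordinates (Campbell–Baker–Hausdorff, terminating at
double brackets). -/
noncomputable def gmul (g h : V) : V :=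
  g + h + (1 / 2 : ℝ) • br g h + (1 / 12 : ℝ) • br g (br g h)
    + (1 / 12 : ℝ) • br h (br h g)

noncomputable def X₁ : V := ![1, 0, 0, 0, 0]
noncomputable def Y₁ : V := ![0, 1, 0, 0, 0]
noncomputable def Y₂ : V := ![0, 0, 1, 0, 0]
noncomputable def Z : V := ![0, 0, 0, 1, 0]
noncomputable def W : V := ![0, 0, 0, 0, 1]

/-- The normal form `exp(2n₁X₁)exp(m₁Y₁)exp(m₂Y₂)exp(kZ)exp(jW)`. -/
noncomputable def E (n₁ m₁ m₂ k j : ℤ) : V :=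
  gmul (gmul (gmul (gmul ((2 * (n₁ : ℝ)) • X₁) ((m₁ : ℝ) • Y₁))
    ((m₂ : ℝ) • Y₂)) ((k : ℝ) • Z)) ((j : ℝ) • W)

/-- The cocompact discrete subgroup `Γ` generated by
`exp(2X₁), exp(Y₁), exp(Y₂), exp(Z), exp(W)`: by the unique normal form, its
elements are exactly the `E n₁ m₁ m₂ k j`. -/
def Γ : Set V := {g | ∃ n₁ m₁ m₂ k j : ℤ, g = E n₁ m₁ m₂ k j}

lemma E_apply (n₁ m₁ m₂ k j : ℤ) : E n₁ m₁ m₂ k j =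
    ![2 * (n₁ : ℝ), (m₁ : ℝ), (m₂ : ℝ), (k : ℝ) + n₁ * m₁,
      (j : ℝ) + m₁ * m₂ / 2 + n₁ * k + n₁ ^ 2 * m₁ / 3] := by
  funext i
  fin_cases i <;>
    simp [E, gmul, br, X₁, Y₁, Y₂, Z, W] <;> ring

set_option linter.unusedTactic false in
lemma conj_eq (a b c d e n₁ m₁ m₂ k j : ℤ) :
    gmul (gmul (E a b c d e) (E n₁ m₁ m₂ k j)) (-(E a b c d e)) =
      E n₁ m₁ m₂ (k + 2 * m₁ * a - 2 * n₁ * b)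
        (j + m₂ * b - m₁ * c + 2 * k * a - 2 * n₁ * d
          + 2 * m₁ * a ^ 2 - 4 * n₁ * a * b + 2 * n₁ ^ 2 * b) := by
  rw [E_apply, E_apply, E_apply]
  funext i
  fin_cases i <;>
    simp [gmul, br] <;> push_cast <;> try ring

lemma E_inj {n₁ m₁ m₂ k j n₁' m₁' m₂' k' j' : ℤ}
    (h : E n₁ m₁ m₂ k j = E n₁' m₁' m₂' k' j') :
    n₁ = n₁' ∧ m₁ = m₁' ∧ m₂ = m₂' ∧ k = k' ∧ j = j' := by
  rw [E_apply, E_apply] at h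
  have h0 := congrFun h 0
  have h1 := congrFun h 1
  have h2 := congrFun h 2
  have h3 := congrFun h 3
  have h4 := congrFun h 4
  simp only [Matrix.cons_val_zero, Matrix.cons_val_one, Matrix.head_cons,
    Matrix.cons_val_two, Matrix.tail_cons, Matrix.cons_val_three,
    Matrix.cons_val_four] at h0 h1 h2 h3 h4
  have e0 : (n₁ : ℝ) = n₁' := by linarith
  have e1 : (m₁ : ℝ) = m₁' := h1
  have e2 : (m₂ : ℝ) = m₂' := h2
  have e3 : (k : ℝ) = k' := by rw [e0, e1] at h3; linarith
  have e4 : (j : ℝ) = j' := by rw [e0, e1, e2, e3] at h4; linarith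
  exact ⟨by exact_mod_cast e0, by exact_mod_cast e1, by exact_mod_cast e2,
    by exact_mod_cast e3, by exact_mod_cast e4⟩

/-- two elements of `Γ` in normal form are conjugate in `Γ`
iff `n₁' = n₁`, `m₁' = m₁`, `m₂' = m₂` and there are integers
`n̄₁, m̄₁, m̄₂, k̄` realizing the stated congruences on `k'` and `j'`. -/
theorem stmt18 (n₁ m₁ m₂ k j n₁' m₁' m₂' k' j' : ℤ) :
    (∃ δ ∈ Γ, gmul (gmul δ (E n₁ m₁ m₂ k j)) (-δ) = E n₁' m₁' m₂' k' j') ↔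
      (n₁' = n₁ ∧ m₁' = m₁ ∧ m₂' = m₂ ∧
        ∃ nb₁ mb₁ mb₂ kb : ℤ,
          k' = k + 2 * m₁ * nb₁ - 2 * n₁ * mb₁ ∧
          j' = j + m₂ * mb₁ - m₁ * mb₂ + 2 * k * nb₁ - 2 * n₁ * kb
            + 2 * m₁ * nb₁ ^ 2 - 4 * n₁ * nb₁ * mb₁ + 2 * n₁ ^ 2 * mb₁) := by
  constructor
  · rintro ⟨δ, ⟨a, b, c, d, e, rfl⟩, h⟩
    rw [conj_eq] at h
    obtain ⟨e1, e2, e3, e4, e5⟩ := E_inj h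
    exact ⟨e1.symm, e2.symm, e3.symm, a, b, c, d, by omega, by omega⟩
  · rintro ⟨rfl, rfl, rfl, a, b, c, d, hk, hj⟩
    refine ⟨E a b c d 0, ⟨a, b, c, d, 0, rfl⟩, ?_⟩
    rw [conj_eq, hk, hj]


end Stmt18
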